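/- Let μ > 0, let p > 0 be an integer, and let N ≥ 2 be an even integer with N > 2^p·μ. Then for every j with 1 ≤ j ≤ N/2 such that N − 2j + 1 ≥ 2^p·μ, the recursive sequences satisfy a_j ≤ 1/(2^{p+1}μ), b_{N/2−j+1} ≤ 1/(2^{p+1}μ), and â_j ≤ 1/((2^{2p+2} + 1)μ). -/

import Mathlib

/-- The recursive sequence `a_j` (with `d_i = 2i`):
`a_j = (d_{N−2j+2} + a_{j−1}μ²)/(d_{N−2j+1}d_{N−2j+2} + a_{j−1}d_{N−2j+1}μ² + μ²)`, `a_0 = 0`. -/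
noncomputable def aSeq (μ : ℝ) (N : ℕ) : ℕ → ℝ
  | 0 => 0
  | j + 1 =>
      (2 * ((N : ℝ) - 2 * ((j : ℝ) + 1) + 2) + aSeq μ N j * μ ^ 2) /
        (2 * ((N : ℝ) - 2 * ((j : ℝ) + 1) + 1) * (2 * ((N : ℝ) - 2 * ((j : ℝ) + 1) + 2)) +
          aSeq μ N j * (2 * ((N : ℝ) - 2 * ((j : ℝ) + 1) + 1)) * μ ^ 2 + μ ^ 2)

/-- The recursive sequence `â_j`:
`â_j = μ/(d_{N−2j+1}d_{N−2j+2} + a_{j−1}d_{N−2j+1}μ² + μ²)`, `â_0 = 0`. -/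
noncomputable def ahatSeq (μ : ℝ) (N : ℕ) : ℕ → ℝ
  | 0 => 0
  | j + 1 =>
      μ / (2 * ((N : ℝ) - 2 * ((j : ℝ) + 1) + 1) * (2 * ((N : ℝ) - 2 * ((j : ℝ) + 1) + 2)) +
          aSeq μ N j * (2 * ((N : ℝ) - 2 * ((j : ℝ) + 1) + 1)) * μ ^ 2 + μ ^ 2)

/-- The recursive sequence `b_j`:
`b_j = (d_{2j−1} + b_{j−1}μ²)/(d_{2j}d_{2j−1} + b_{j−1}d_{2j}μ² + μ²)`, `b_0 = 0`. -/
noncomputable def bSeq (μ : ℝ) : ℕ → ℝ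
  | 0 => 0
  | j + 1 =>
      (2 * (2 * ((j : ℝ) + 1) - 1) + bSeq μ j * μ ^ 2) /
        (2 * (2 * ((j : ℝ) + 1)) * (2 * (2 * ((j : ℝ) + 1) - 1)) +
          bSeq μ j * (2 * (2 * ((j : ℝ) + 1))) * μ ^ 2 + μ ^ 2)

/-
Both `aSeq` and `bSeq` iterate the map `x ↦ (e + x μ²) / (d e + x d μ² + μ²)` on nonnegative
arguments, and any such value is at most `1 / d` because the numerator times `d` falls short of the
denominator by exactly `μ²`. For `a_j` the relevant `d` is `2 (N − 2j + 1)`; for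
`b_{N/2−j+1}` it is `4 (N/2 − j + 1) ≥ 2 (N − 2j + 1)`. Both are at least `2^{p+1} μ` under the
hypothesis. The denominator of `â_j` is at least `d² + μ²`, which gives the third bound.
-/

noncomputable def contStep (μ d e x : ℝ) : ℝ :=
  (e + x * μ ^ 2) / (d * e + x * d * μ ^ 2 + μ ^ 2)

section contStep

variable {μ d e x : ℝ}

lemma contStep_nonneg (hd : 0 ≤ d) (he : 0 ≤ e) (hx : 0 ≤ x) : 0 ≤ contStep μ d e x := by
  unfold contStep
  positivity

lemma contStep_le_one_div (hd : 0 < d) (he : 0 < e) (hx : 0 ≤ x) :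
    contStep μ d e x ≤ 1 / d := by
  unfold contStep
  rw [div_le_div_iff₀ (by positivity) hd]
  nlinarith [sq_nonneg μ]

end contStep

lemma aSeq_succ (μ : ℝ) (N j : ℕ) :
    aSeq μ N (j + 1) = contStep μ (2 * ((N : ℝ) - 2 * ((j : ℝ) + 1) + 1))
      (2 * ((N : ℝ) - 2 * ((j : ℝ) + 1) + 2)) (aSeq μ N j) := rfl

lemma bSeq_succ (μ : ℝ) (k : ℕ) :
    bSeq μ (k + 1) = contStep μ (2 * (2 * ((k : ℝ) + 1))) (2 * (2 * ((k : ℝ) + 1) - 1))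
      (bSeq μ k) := rfl

lemma aSeq_nonneg (μ : ℝ) {N j : ℕ} (hj : 2 * (j : ℝ) ≤ N + 1) : 0 ≤ aSeq μ N j := by
  induction j with
  | zero => rfl
  | succ j ih =>
    push_cast at hj
    rw [aSeq_succ]
    exact contStep_nonneg (by linarith) (by linarith) (ih (by linarith))

lemma bSeq_nonneg (μ : ℝ) (k : ℕ) : 0 ≤ bSeq μ k := by
  induction k with
  | zero => rfl
  | succ k ih =>
    rw [bSeq_succ]
    exact contStep_nonneg (by positivity) (by linarith [(k.cast_nonneg : (0 : ℝ) ≤ k)]) ih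

lemma aSeq_le_one_div (μ : ℝ) {N j : ℕ} (hc : 0 < (N : ℝ) - 2 * j + 1) :
    aSeq μ N j ≤ 1 / (2 * ((N : ℝ) - 2 * j + 1)) := by
  cases j with
  | zero => exact one_div_nonneg.mpr (by simpa using hc.le)
  | succ j =>
    push_cast at hc ⊢
    rw [aSeq_succ]
    exact contStep_le_one_div (by linarith) (by linarith) (aSeq_nonneg μ (by linarith))

lemma bSeq_le_one_div (μ : ℝ) (m : ℕ) : bSeq μ m ≤ 1 / (4 * m) := by
  cases m with
  | zero => simp [bSeq]
  | succ k =>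
    have hk : (0 : ℝ) ≤ k := k.cast_nonneg
    calc bSeq μ (k + 1) ≤ 1 / (2 * (2 * ((k : ℝ) + 1))) :=
          contStep_le_one_div (by positivity) (by linarith) (bSeq_nonneg μ k)
      _ = 1 / (4 * ((k + 1 : ℕ) : ℝ)) := by push_cast; ring

lemma ahatSeq_le_div {μ : ℝ} (hμ : 0 < μ) {N j : ℕ} (hc : 0 < (N : ℝ) - 2 * j + 1) :
    ahatSeq μ N j ≤ μ / ((2 * ((N : ℝ) - 2 * j + 1)) ^ 2 + μ ^ 2) := by
  cases j with
  | zero => exact (div_pos hμ (by positivity)).le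
  | succ j =>
    push_cast at hc ⊢
    have ha := aSeq_nonneg μ (N := N) (j := j) (by linarith)
    show μ / (_ + _ + _) ≤ _
    apply div_le_div_of_nonneg_left hμ.le (by positivity)
    nlinarith [mul_nonneg (mul_nonneg ha hc.le) (sq_nonneg μ)]

theorem stmt4_general (μ : ℝ) (hμ : 0 < μ) (p : ℕ) (N : ℕ)
    (j : ℕ)
    (hcond : (2 : ℝ) ^ p * μ ≤ (N : ℝ) - 2 * (j : ℝ) + 1) :
    aSeq μ N j ≤ 1 / ((2 : ℝ) ^ (p + 1) * μ) ∧
    bSeq μ (N / 2 - j + 1) ≤ 1 / ((2 : ℝ) ^ (p + 1) * μ) ∧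
    ahatSeq μ N j ≤ 1 / (((2 : ℝ) ^ (2 * p + 2) + 1) * μ) := by
  set c : ℝ := (N : ℝ) - 2 * j + 1
  have hpos : 0 < (2 : ℝ) ^ (p + 1) * μ := by positivity
  have hdiag : (2 : ℝ) ^ (p + 1) * μ ≤ 2 * c := by rw [pow_succ]; linarith
  have hc : 0 < c := by linarith
  have hhalf : 2 * c ≤ 4 * ((N / 2 - j + 1 : ℕ) : ℝ) := by
    have : N + 1 ≤ 2 * (N / 2 - j + 1) + 2 * j := by omega
    have : (N : ℝ) + 1 ≤ 2 * ((N / 2 - j + 1 : ℕ) : ℝ) + 2 * j := by exact_mod_cast this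
    linarith
  refine ⟨?_, ?_, ?_⟩
  · exact (aSeq_le_one_div μ hc).trans (one_div_le_one_div_of_le hpos hdiag)
  · exact (bSeq_le_one_div μ _).trans (one_div_le_one_div_of_le hpos (hdiag.trans hhalf))
  · calc ahatSeq μ N j ≤ μ / ((2 * c) ^ 2 + μ ^ 2) := ahatSeq_le_div hμ hc
      _ ≤ μ / (((2 : ℝ) ^ (p + 1) * μ) ^ 2 + μ ^ 2) := by
        gcongr
      _ = 1 / (((2 : ℝ) ^ (2 * p + 2) + 1) * μ) := by
        field_simp
        ring

/-- Decay bounds for `a_j`, `b_{N/2−j+1}`, `â_j` in the diagonally dominant regime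
`N − 2j + 1 ≥ 2^p μ`. -/
theorem stmt4 (μ : ℝ) (hμ : 0 < μ) (p : ℕ) (hp : 0 < p) (N : ℕ) (hN : 2 ≤ N) (hNe : Even N)
    (hNμ : (2 : ℝ) ^ p * μ < (N : ℝ))
    (j : ℕ) (hj1 : 1 ≤ j) (hj2 : j ≤ N / 2)
    (hcond : (2 : ℝ) ^ p * μ ≤ (N : ℝ) - 2 * (j : ℝ) + 1) :
    aSeq μ N j ≤ 1 / ((2 : ℝ) ^ (p + 1) * μ) ∧
    bSeq μ (N / 2 - j + 1) ≤ 1 / ((2 : ℝ) ^ (p + 1) * μ) ∧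
    ahatSeq μ N j ≤ 1 / (((2 : ℝ) ^ (2 * p + 2) + 1) * μ) :=
  stmt4_general μ hμ p N j hcond
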